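/- Every selection pointwise-maximal Hausdorff space X is zero-dimensional, i.e. X has a base of clopen sets. -/
import Mathlib


open Set Topology Filter

universe u v

/-- The hyperspace `𝓕(X)` of all nonempty closed subsets of a topological space `X`. -/
structure NEClosed (X : Type u) [TopologicalSpace X] : Type u where
  carrier : Set X
  nonempty' : carrier.Nonempty
  closed' : IsClosed carrier

namespace NEClosed

variable {X : Type u} [TopologicalSpace X]

/-- The basic Vietoris set `⟨𝒱⟩` determined by a family `𝒱` of subsets of `X`. -/
def basicSet (𝒱 : Set (Set X)) : Set (NEClosed X) :=
  {S | S.carrier ⊆ ⋃₀ 𝒱 ∧ ∀ V ∈ 𝒱, (S.carrier ∩ V).Nonempty}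

/-- The Vietoris topology on `𝓕(X)`, generated by the sets `⟨𝒱⟩` where `𝒱` runs over the
finite families of open subsets of `X`. -/
instance : TopologicalSpace (NEClosed X) :=
  TopologicalSpace.generateFrom
    {t | ∃ 𝒱 : Set (Set X), 𝒱.Finite ∧ (∀ V ∈ 𝒱, IsOpen V) ∧ t = basicSet 𝒱}

/-- The trace of a nonempty closed set `S` on a subspace `A` which it meets, as a nonempty
closed subset of `A`. -/
def trace (S : NEClosed X) (A : Set X) (h : (S.carrier ∩ A).Nonempty) : NEClosed A where
  carrier := Subtype.val ⁻¹' S.carrier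
  nonempty' := ⟨⟨h.choose, h.choose_spec.2⟩, h.choose_spec.1⟩
  closed' := S.closed'.preimage continuous_subtype_val

end NEClosed

/-- `f` is a Vietoris continuous selection for `𝓕(X)`. -/
def IsVSelection {X : Type u} [TopologicalSpace X] (f : NEClosed X → X) : Prop :=
  Continuous f ∧ ∀ S : NEClosed X, f S ∈ S.carrier

/-- `f` is a `p`-maximal selection: `f S = p` whenever `p ∈ S`. -/
def PMaximal {X : Type u} [TopologicalSpace X] (f : NEClosed X → X) (p : X) : Prop :=
  ∀ S : NEClosed X, p ∈ S.carrier → f S = p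

/-- `f` is a `p`-minimal selection: `f S ≠ p` whenever `S ≠ {p}`. -/
def PMinimal {X : Type u} [TopologicalSpace X] (f : NEClosed X → X) (p : X) : Prop :=
  ∀ S : NEClosed X, S.carrier ≠ {p} → f S ≠ p

/-- `H` is clopen modulo the point `p`: `H` is a nonempty closed set, `p ∈ H`, and
`H \ {p}` is open. -/
def ClopenModulo {X : Type u} [TopologicalSpace X] (H : Set X) (p : X) : Prop :=
  H.Nonempty ∧ IsClosed H ∧ p ∈ H ∧ IsOpen (H \ {p})

/-- `Δ(X)`: the family of all nonempty closed subsets of `X` clopen modulo some point. -/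
def DeltaSet (X : Type u) [TopologicalSpace X] : Set (Set X) :=
  {H | ∃ p, ClopenModulo H p}

/-- `Δ_ω(X)`: all `H ∈ Δ(X)` such that `H` is clopen, or `H` is clopen modulo a point `q`
at which `H` (with the subspace topology) has a countable neighbourhood base. -/
def DeltaOmegaSet (X : Type u) [TopologicalSpace X] : Set (Set X) :=
  {H | H ∈ DeltaSet X ∧ (IsClopen H ∨ ∃ q, ∃ hq : q ∈ H,
    ClopenModulo H q ∧ (𝓝 (⟨q, hq⟩ : H)).IsCountablyGenerated)}

/-- The set `[V]_f = {x : f(Vᶜ ∪ {x}) = x}` for an open set `V`. -/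
def bracketSel {X : Type u} [TopologicalSpace X] [T1Space X]
    (f : NEClosed X → X) (V : Set X) (hV : IsOpen V) : Set X :=
  {x | f ⟨Vᶜ ∪ {x}, ⟨x, Or.inr rfl⟩, hV.isClosed_compl.union isClosed_singleton⟩ = x}

/-- The set `⟨V⟩_f = [V]_f ∩ V` for an open set `V`. -/
def angleSel {X : Type u} [TopologicalSpace X] [T1Space X]
    (f : NEClosed X → X) (V : Set X) (hV : IsOpen V) : Set X :=
  bracketSel f V hV ∩ V

/-- A quasi-ordinal decomposition of `X`: a continuous surjection onto a compact ordinal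
space `[0, γ]` all of whose fibers are clopen modulo a point. -/
def IsQuasiOrdDecomp {X : Type u} [TopologicalSpace X] (γ : Ordinal.{u})
    (η : X → Set.Iic γ) : Prop :=
  Continuous η ∧ Function.Surjective η ∧ ∀ α : Set.Iic γ, η ⁻¹' {α} ∈ DeltaSet X

/-- An ordinal decomposition of `X`: a closed quotient map onto a compact ordinal space
`[0, γ]` all of whose fibers are clopen modulo a point. -/
def IsOrdDecomp {X : Type u} [TopologicalSpace X] (γ : Ordinal.{u})
    (η : X → Set.Iic γ) : Prop :=
  IsQuotientMap η ∧ IsClosedMap η ∧ ∀ α : Set.Iic γ, η ⁻¹' {α} ∈ DeltaSet X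

section ZeroDimAux

open TopologicalSpace

variable {X : Type u} [TopologicalSpace X]

theorem NEClosed.ext' {S T : NEClosed X} (h : S.carrier = T.carrier) : S = T := by
  cases S; cases T; simpa using h

theorem continuous_toNEClosed {α : Type v} [TopologicalSpace α] {m : α → NEClosed X}
    (h : ∀ 𝒱 : Set (Set X), 𝒱.Finite → (∀ V ∈ 𝒱, IsOpen V) →
      IsOpen {a | (m a).carrier ⊆ ⋃₀ 𝒱 ∧ ∀ V ∈ 𝒱, ((m a).carrier ∩ V).Nonempty}) :
    Continuous m := by
  apply continuous_generateFrom_iff.mpr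
  rintro s ⟨𝒱, hfin, hop, rfl⟩
  exact h 𝒱 hfin hop

variable [T2Space X]

/-- `F ∪ {x}` as a nonempty closed set. -/
def NEClosed.withPoint (F : Set X) (hF : IsClosed F) (x : X) : NEClosed X :=
  ⟨F ∪ {x}, ⟨x, Or.inr rfl⟩, hF.union isClosed_singleton⟩

theorem continuous_withPoint (F : Set X) (hF : IsClosed F) :
    Continuous (NEClosed.withPoint F hF) := by
  apply continuous_toNEClosed
  intro 𝒱 hfin hop
  by_cases hsub : F ⊆ ⋃₀ 𝒱
  · have heq : {a | (NEClosed.withPoint F hF a).carrier ⊆ ⋃₀ 𝒱 ∧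
        ∀ V ∈ 𝒱, ((NEClosed.withPoint F hF a).carrier ∩ V).Nonempty}
        = (⋃₀ 𝒱) ∩ ⋂ V ∈ 𝒱, {a | (F ∩ V).Nonempty ∨ a ∈ V} := by
      ext a
      simp only [NEClosed.withPoint, Set.mem_setOf_eq, Set.union_subset_iff,
        Set.singleton_subset_iff, Set.union_inter_distrib_right, Set.union_nonempty,
        Set.singleton_inter_nonempty, Set.mem_inter_iff, Set.mem_iInter]
      tauto
    rw [heq]
    refine (isOpen_sUnion fun V hV => hop V hV).inter (hfin.isOpen_biInter fun V hV => ?_)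
    by_cases hFV : (F ∩ V).Nonempty
    · simp only [hFV, true_or, Set.setOf_true]; exact isOpen_univ
    · simp only [hFV, false_or, Set.setOf_mem_eq]; exact hop V hV
  · have heq : {a | (NEClosed.withPoint F hF a).carrier ⊆ ⋃₀ 𝒱 ∧
        ∀ V ∈ 𝒱, ((NEClosed.withPoint F hF a).carrier ∩ V).Nonempty} = ∅ := by
      ext a
      simp only [Set.mem_empty_iff_false, iff_false, Set.mem_setOf_eq, not_and]
      intro hc
      exact absurd (Set.Subset.trans Set.subset_union_left hc) hsub
    rw [heq]; exact isOpen_empty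

/-- `{u, v}` as a nonempty closed set. -/
def NEClosed.pairNE (u v : X) : NEClosed X :=
  ⟨{u, v}, ⟨u, Or.inl rfl⟩, ((Set.finite_singleton v).insert u).isClosed⟩

theorem NEClosed.pairNE_comm (u v : X) : NEClosed.pairNE u v = NEClosed.pairNE v u :=
  NEClosed.ext' (Set.pair_comm u v)

theorem pair_inter_nonempty {a b : X} {V : Set X} :
    (({a, b} : Set X) ∩ V).Nonempty ↔ a ∈ V ∨ b ∈ V := by
  constructor
  · rintro ⟨c, hc, hcV⟩
    simp only [Set.mem_insert_iff, Set.mem_singleton_iff] at hc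
    rcases hc with rfl | rfl
    · exact Or.inl hcV
    · exact Or.inr hcV
  · rintro (h | h)
    · exact ⟨a, Or.inl rfl, h⟩
    · exact ⟨b, Or.inr rfl, h⟩

theorem continuous_pairNE : Continuous fun z : X × X => NEClosed.pairNE z.1 z.2 := by
  apply continuous_toNEClosed
  intro 𝒱 hfin hop
  have heq : {z : X × X | (NEClosed.pairNE z.1 z.2).carrier ⊆ ⋃₀ 𝒱 ∧
      ∀ V ∈ 𝒱, ((NEClosed.pairNE z.1 z.2).carrier ∩ V).Nonempty}
      = ((⋃₀ 𝒱) ×ˢ (⋃₀ 𝒱)) ∩ ⋂ V ∈ 𝒱, (V ×ˢ (Set.univ : Set X) ∪ (Set.univ : Set X) ×ˢ V) := by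
    ext z
    simp only [NEClosed.pairNE, Set.mem_setOf_eq, Set.insert_subset_iff,
      Set.singleton_subset_iff, pair_inter_nonempty, Set.mem_inter_iff, Set.mem_prod,
      Set.mem_iInter, Set.mem_union, Set.mem_univ, and_true, true_and]
    try tauto
  rw [heq]
  have ho : IsOpen (⋃₀ 𝒱) := isOpen_sUnion fun V hV => hop V hV
  refine (ho.prod ho).inter (hfin.isOpen_biInter fun V hV => ?_)
  exact ((hop V hV).prod isOpen_univ).union (isOpen_univ.prod (hop V hV))

theorem star_lemma {f : NEClosed X → X} (hfc : Continuous f)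
    (hsel : ∀ S : NEClosed X, f S ∈ S.carrier)
    {p x : X} (hfmax : PMaximal f p) (hx : x ≠ p) :
    ∃ Y Z : Set X, IsOpen Y ∧ IsOpen Z ∧ p ∈ Y ∧ x ∈ Z ∧ Disjoint Y Z ∧
      ∀ b ∈ Y, ∀ z ∈ Z, f (NEClosed.pairNE z b) = b := by
  obtain ⟨Ox, Op, hOx, hOp, hxOx, hpOp, hdisj⟩ := t2_separation hx
  have hφ : Continuous fun w : X × X => f (NEClosed.pairNE w.1 w.2) :=
    hfc.comp continuous_pairNE
  have hmem : (x, p) ∈ (fun w : X × X => f (NEClosed.pairNE w.1 w.2)) ⁻¹' Op := by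
    have hfp : f (NEClosed.pairNE x p) = p :=
      hfmax _ (Set.mem_insert_iff.mpr (Or.inr rfl))
    simpa [Set.mem_preimage, hfp] using hpOp
  obtain ⟨Z₀, Y₀, hZ₀, hY₀, hxZ₀, hpY₀, hsub⟩ :=
    isOpen_prod_iff.mp (hOp.preimage hφ) x p hmem
  refine ⟨Y₀ ∩ Op, Z₀ ∩ Ox, hY₀.inter hOp, hZ₀.inter hOx, ⟨hpY₀, hpOp⟩, ⟨hxZ₀, hxOx⟩,
    hdisj.symm.mono Set.inter_subset_right Set.inter_subset_right, ?_⟩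
  rintro b ⟨hbY, hbOp⟩ z ⟨hzZ, hzOx⟩
  have hz : f (NEClosed.pairNE z b) ∈ Op := hsub (Set.mk_mem_prod hzZ hbY)
  have hmem2 := hsel (NEClosed.pairNE z b)
  simp only [NEClosed.pairNE, Set.mem_insert_iff, Set.mem_singleton_iff] at hmem2
  rcases hmem2 with h | h
  · exact absurd (h ▸ hz) (Set.disjoint_left.mp hdisj hzOx)
  · exact h

theorem nset_props {f : NEClosed X → X} (hfc : Continuous f)
    (hsel : ∀ S : NEClosed X, f S ∈ S.carrier) (b : X) :
    IsOpen {y | y ≠ b ∧ f (NEClosed.pairNE b y) = y} ∧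
      closure {y | y ≠ b ∧ f (NEClosed.pairNE b y) = y}
        ⊆ {y | y ≠ b ∧ f (NEClosed.pairNE b y) = y} ∪ {b} := by
  have hgc : Continuous fun y : X => f (NEClosed.pairNE b y) :=
    hfc.comp (continuous_pairNE.comp (continuous_const.prodMk continuous_id))
  have hsel' : ∀ y : X, f (NEClosed.pairNE b y) = b ∨ f (NEClosed.pairNE b y) = y := by
    intro y
    have := hsel (NEClosed.pairNE b y)
    simpa only [NEClosed.pairNE, Set.mem_insert_iff, Set.mem_singleton_iff] using this
  constructor
  · have heq : {y | y ≠ b ∧ f (NEClosed.pairNE b y) = y}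
        = {y | f (NEClosed.pairNE b y) = b}ᶜ := by
      ext y
      simp only [Set.mem_setOf_eq, Set.mem_compl_iff]
      constructor
      · rintro ⟨hyb, hy⟩ hb'
        exact hyb (by rw [← hy, hb'])
      · intro hb'
        have hy : f (NEClosed.pairNE b y) = y := (hsel' y).resolve_left hb'
        refine ⟨fun h => hb' ?_, hy⟩
        rw [hy, h]
    rw [heq]
    exact (isClosed_eq hgc continuous_const).isOpen_compl
  · have hsubW : {y | y ≠ b ∧ f (NEClosed.pairNE b y) = y}
        ⊆ {y | f (NEClosed.pairNE b y) = y} := fun y hy => hy.2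
    have hWclosed : IsClosed {y | f (NEClosed.pairNE b y) = y} :=
      isClosed_eq hgc continuous_id
    intro y hy
    have hyW : f (NEClosed.pairNE b y) = y :=
      (hWclosed.closure_subset_iff.mpr hsubW) hy
    by_cases hyb : y = b
    · exact Or.inr (by simp [hyb])
    · exact Or.inl ⟨hyb, hyW⟩

theorem clopen_sep (hmax : ∀ p : X, ∃ f : NEClosed X → X, IsVSelection f ∧ PMaximal f p)
    {p q : X} (hpq : p ≠ q) :
    ∃ W : Set X, IsClopen W ∧ p ∈ W ∧ q ∉ W := by
  obtain ⟨f, ⟨hfc, hfsel⟩, hfmax⟩ := hmax p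
  obtain ⟨Y, Z, hYo, hZo, hpY, hqZ, hYZ, hfb⟩ := star_lemma hfc hfsel hfmax hpq.symm
  by_cases hb : ∃ b ∈ Y, b ≠ p
  · obtain ⟨b, hbY, hbp⟩ := hb
    set N := {y | y ≠ b ∧ f (NEClosed.pairNE b y) = y} with hNdef
    obtain ⟨hNopen, hNcl⟩ := nset_props hfc hfsel b
    have hpN : p ∈ N :=
      ⟨hbp.symm, hfmax _ (Set.mem_insert_iff.mpr (Or.inr rfl))⟩
    have hqN : q ∉ N := by
      rintro ⟨hqb, hq⟩
      have h1 : f (NEClosed.pairNE q b) = b := hfb b hbY q hqZ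
      rw [NEClosed.pairNE_comm] at h1
      exact hqb (by rw [← hq, h1])
    by_cases hbc : b ∈ closure N
    · obtain ⟨g, ⟨hgc, hgsel⟩, hgmax⟩ := hmax b
      have hqb : q ≠ b := fun h => (Set.disjoint_left.mp hYZ hbY) (h ▸ hqZ)
      obtain ⟨Y', Z', hY'o, hZ'o, hbY', hqZ', hY'Z', hgb⟩ :=
        star_lemma hgc hgsel hgmax hqb
      obtain ⟨c, hcY', hcN⟩ := mem_closure_iff.mp hbc Y' hY'o hbY'
      set A := {y | y ≠ c ∧ g (NEClosed.pairNE c y) = y} with hAdef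
      obtain ⟨hAopen, hAcl⟩ := nset_props hgc hgsel c
      have hbA : b ∈ A :=
        ⟨(hcN.1).symm, hgmax _ (Set.mem_insert_iff.mpr (Or.inr rfl))⟩
      have hqA : q ∉ A := by
        rintro ⟨hqc, hq⟩
        have h1 : g (NEClosed.pairNE q c) = c := hgb c hcY' q hqZ'
        rw [NEClosed.pairNE_comm] at h1
        exact hqc (by rw [← hq, h1])
      refine ⟨N ∪ A, ⟨?_, hNopen.union hAopen⟩, Or.inl hpN, ?_⟩
      · apply isClosed_of_closure_subset
        rw [closure_union]
        rintro x (hx | hx)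
        · rcases hNcl hx with h | h
          · exact Or.inl h
          · exact Or.inr ((Set.mem_singleton_iff.mp h) ▸ hbA)
        · rcases hAcl hx with h | h
          · exact Or.inr h
          · exact Or.inl ((Set.mem_singleton_iff.mp h) ▸ hcN)
      · rintro (h | h)
        · exact hqN h
        · exact hqA h
    · refine ⟨N, ⟨?_, hNopen⟩, hpN, hqN⟩
      apply isClosed_of_closure_subset
      intro x hx
      rcases hNcl hx with h | h
      · exact h
      · exact absurd ((Set.mem_singleton_iff.mp h) ▸ hx) hbc
  · push_neg at hb
    have hY : Y = {p} :=
      Set.Subset.antisymm (fun b hbY => hb b hbY) (Set.singleton_subset_iff.mpr hpY)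
    exact ⟨{p}, ⟨isClosed_singleton, hY ▸ hYo⟩, rfl,
      fun h => hpq (Set.mem_singleton_iff.mp h).symm⟩

end ZeroDimAux


/-- Every selection pointwise-maximal Hausdorff space is zero-dimensional: it has a base of
clopen sets. -/
theorem stmt_8 {X : Type u} [TopologicalSpace X] [T2Space X]
    (hmax : ∀ p : X, ∃ f : NEClosed X → X, IsVSelection f ∧ PMaximal f p) :
    ∀ (p : X) (V : Set X), IsOpen V → p ∈ V → ∃ U : Set X, IsClopen U ∧ p ∈ U ∧ U ⊆ V := by
  intro p V hV hpV
  by_cases hVc : Vᶜ.Nonempty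
  · obtain ⟨f, ⟨hfc, hfsel⟩, hfmax⟩ := hmax p
    set h : X → X := fun x => f (NEClosed.withPoint Vᶜ hV.isClosed_compl x) with hhdef
    have hh : Continuous h := hfc.comp (continuous_withPoint _ _)
    set q : X := f ⟨Vᶜ, hVc, hV.isClosed_compl⟩ with hqdef
    have hqVc : q ∈ Vᶜ := hfsel ⟨Vᶜ, hVc, hV.isClosed_compl⟩
    have hpq : p ≠ q := fun hpq' => hqVc (hpq' ▸ hpV)
    set U₀ : Set X := V ∩ h ⁻¹' V with hU₀def
    have hU₀open : IsOpen U₀ := hV.inter (hV.preimage hh)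
    have hhp : h p = p := hfmax _ (Or.inr rfl)
    have hpU₀ : p ∈ U₀ := ⟨hpV, by simp only [Set.mem_preimage, hhp]; exact hpV⟩
    have hfix : ∀ x ∈ U₀, h x = x := by
      rintro x ⟨hxV, hxpre⟩
      have hmem : h x ∈ Vᶜ ∪ {x} := hfsel (NEClosed.withPoint Vᶜ hV.isClosed_compl x)
      rcases hmem with hm | hm
      · exact absurd hxpre hm
      · exact hm
    have hclos : closure U₀ ⊆ U₀ ∪ {q} := by
      have hsubFix : U₀ ⊆ {x | h x = x} := fun x hx => hfix x hx
      have hFixClosed : IsClosed {x | h x = x} := isClosed_eq hh continuous_id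
      intro x hx
      have hxfix : h x = x := (hFixClosed.closure_subset_iff.mpr hsubFix) hx
      by_cases hxV : x ∈ V
      · exact Or.inl ⟨hxV, by rw [Set.mem_preimage, hxfix]; exact hxV⟩
      · have hcar : NEClosed.withPoint Vᶜ hV.isClosed_compl x
            = ⟨Vᶜ, hVc, hV.isClosed_compl⟩ := by
          apply NEClosed.ext'
          show Vᶜ ∪ {x} = Vᶜ
          exact Set.union_eq_self_of_subset_right (Set.singleton_subset_iff.mpr hxV)
        have : h x = q := by rw [hhdef]; simp only; rw [hcar]
        exact Or.inr (by rw [← hxfix, this]; rfl)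
    obtain ⟨W, hWclopen, hpW, hqW⟩ := clopen_sep hmax hpq
    refine ⟨W ∩ U₀, ⟨?_, hWclopen.2.inter hU₀open⟩, ⟨hpW, hpU₀⟩,
      fun x hx => hx.2.1⟩
    have heq : W ∩ U₀ = W ∩ closure U₀ := by
      apply Set.Subset.antisymm
      · exact Set.inter_subset_inter_right _ subset_closure
      · rintro x ⟨hxW, hxcl⟩
        rcases hclos hxcl with hm | hm
        · exact ⟨hxW, hm⟩
        · exact absurd (Set.mem_singleton_iff.mp hm ▸ hxW) hqW
    rw [heq]
    exact hWclopen.1.inter isClosed_closure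
  · refine ⟨Set.univ, isClopen_univ, Set.mem_univ p, fun x _ => ?_⟩
    rw [Set.not_nonempty_iff_eq_empty, Set.compl_empty_iff] at hVc
    rw [hVc]; exact Set.mem_univ x
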